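/- arXiv:1801.10292 — 5 statements merged into one kernel-verified Lean document; each statement's English description precedes it below -/
import Mathlib

section
/- For any 2m−1 distinct field elements x_1,…,x_{2m−1}, there exist scalars c_1,…,c_{2m−1} (depending only on x_1,…,x_{2m−1}) such that for all matrices A_0,…,A_{m−1} (of size N×N/m) and B_0,…,B_{m−1} (of size N/m×N), Σ_{r=1}^{2m−1} c_r p_A(x_r) p_B(x_r) = Σ_{i=0}^{m−1} A_i B_i, where p_A(x) = Σ A_i x^i and p_B(x) = Σ B_j x^{m−1−j}. -/
/-- Linear decodability of MatDot codes: for any 2m−1 distinct points x_r there exist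
scalars c_r such that Σ_r c_r p_A(x_r) p_B(x_r) = Σ_i A_i B_i for all A, B. -/
theorem matdot_linear_decoding (F : Type*) [Field F] (m N q : ℕ) (hm : 0 < m)
    (x : Fin (2 * m - 1) → F) (hx : Function.Injective x) :
    ∃ c : Fin (2 * m - 1) → F,
      ∀ (A : Fin m → Matrix (Fin N) (Fin q) F) (B : Fin m → Matrix (Fin q) (Fin N) F),
        ∑ r : Fin (2 * m - 1),
          c r • ((∑ i : Fin m, x r ^ (i : ℕ) • A i) *
                 (∑ j : Fin m, x r ^ (m - 1 - (j : ℕ)) • B j))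
          = ∑ i : Fin m, A i * B i := by
  have h2m : m - 1 < 2 * m - 1 := by omega
  set i₀ : Fin (2 * m - 1) := ⟨m - 1, h2m⟩ with hi₀
  have hdet : IsUnit (Matrix.vandermonde x).det :=
    isUnit_iff_ne_zero.mpr ((Matrix.det_vandermonde_ne_zero_iff).mpr hx)
  have hinv := Matrix.nonsing_inv_mul _ hdet
  set c : Fin (2 * m - 1) → F := fun r => (Matrix.vandermonde x)⁻¹ i₀ r with hc
  have key : ∀ k : Fin (2 * m - 1),
      ∑ r, c r * x r ^ (k : ℕ) = if i₀ = k then 1 else 0 := by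
    intro k
    have := congrFun (congrFun hinv i₀) k
    simpa [Matrix.mul_apply, Matrix.vandermonde, Matrix.one_apply, hc] using this
  refine ⟨c, fun A B => ?_⟩
  have expand : ∀ r : Fin (2 * m - 1),
      c r • ((∑ i : Fin m, x r ^ (i : ℕ) • A i) *
             (∑ j : Fin m, x r ^ (m - 1 - (j : ℕ)) • B j))
      = ∑ i : Fin m, ∑ j : Fin m,
          (c r * x r ^ ((i : ℕ) + (m - 1 - (j : ℕ)))) • (A i * B j) := by
    intro r
    rw [Matrix.sum_mul, Finset.smul_sum]
    refine Finset.sum_congr rfl fun i _ => ?_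
    rw [Matrix.mul_sum, Finset.smul_sum]
    refine Finset.sum_congr rfl fun j _ => ?_
    rw [Matrix.smul_mul, Matrix.mul_smul, smul_smul, smul_smul, pow_add]
    congr 1
    ring
  calc ∑ r : Fin (2 * m - 1),
          c r • ((∑ i : Fin m, x r ^ (i : ℕ) • A i) *
                 (∑ j : Fin m, x r ^ (m - 1 - (j : ℕ)) • B j))
      = ∑ r : Fin (2 * m - 1), ∑ i : Fin m, ∑ j : Fin m,
          (c r * x r ^ ((i : ℕ) + (m - 1 - (j : ℕ)))) • (A i * B j) := by
        exact Finset.sum_congr rfl fun r _ => expand r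
    _ = ∑ i : Fin m, ∑ j : Fin m,
          (∑ r : Fin (2 * m - 1), c r * x r ^ ((i : ℕ) + (m - 1 - (j : ℕ)))) • (A i * B j) := by
        rw [Finset.sum_comm]
        refine Finset.sum_congr rfl fun i _ => ?_
        rw [Finset.sum_comm]
        refine Finset.sum_congr rfl fun j _ => ?_
        rw [Finset.sum_smul]
    _ = ∑ i : Fin m, ∑ j : Fin m, (if i = j then (1:F) else 0) • (A i * B j) := by
        refine Finset.sum_congr rfl fun i _ => Finset.sum_congr rfl fun j _ => ?_
        have hk : (i : ℕ) + (m - 1 - (j : ℕ)) < 2 * m - 1 := by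
          have := i.isLt; have := j.isLt; omega
        have := key ⟨(i : ℕ) + (m - 1 - (j : ℕ)), hk⟩
        simp only [this]
        congr 1
        have hij : (i₀ = (⟨(i : ℕ) + (m - 1 - (j : ℕ)), hk⟩ : Fin (2 * m - 1))) ↔ i = j := by
          rw [Fin.ext_iff, Fin.ext_iff]
          have := i.isLt; have := j.isLt
          simp only [hi₀]
          omega
        by_cases h : i = j
        · rw [if_pos (hij.mpr h), if_pos h]
        · rw [if_neg (fun hh => h (hij.mp hh)), if_neg h]
    _ = ∑ i : Fin m, A i * B i := by
        simp
end

section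
/- Let p_A(x,y) = Σ_{i=0}^{t−1} Σ_{j=0}^{s−1} A_{i,j} x^i y^j and p_B(y,z) = Σ_{k=0}^{s−1} Σ_{l=0}^{t−1} B_{k,l} y^{s−1−k} z^l. After substituting y = x^t and z = x^{t(2s−1)}, the coefficient of x^{i + t(s−1) + t(2s−1)l} in the single-variable polynomial p_A(x, x^t) p_B(x^t, x^{t(2s−1)}) equals Σ_{k=0}^{s−1} A_{i,k} B_{k,l}, for every i, l ∈ {0,…,t−1}. -/
lemma polydot_aux (m u v x y : ℕ) (hu : u < m) (hv : v < m)
    (h : u + m * x = v + m * y) : u = v ∧ x = y := by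
  have h1 : (u + m * x) % m = (v + m * y) % m := by rw [h]
  rw [Nat.add_mul_mod_self_left, Nat.add_mul_mod_self_left,
    Nat.mod_eq_of_lt hu, Nat.mod_eq_of_lt hv] at h1
  subst h1
  have h2 : m * x = m * y := by omega
  exact ⟨rfl, Nat.eq_of_mul_eq_mul_left (by omega) h2⟩

/-- PolyDot decoding: after the substitution y = x^t, z = x^{t(2s−1)}, the coefficient of
x^{i + t(s−1) + t(2s−1)l} in p_A(x, x^t) p_B(x^t, x^{t(2s−1)}) equals Σ_k A_{i,k} B_{k,l}.
The coefficient of x^e in the product is the sum of A_{i',j} B_{k,l'} over all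
(i',j,k,l') with i' + t(s−1+j−k) + t(2s−1)l' = e. -/
theorem polydot_coefficient (F : Type*) [Field F] (s t N a : ℕ) (hs : 0 < s) (ht : 0 < t)
    (A : Fin t → Fin s → Matrix (Fin N) (Fin a) F)
    (B : Fin s → Fin t → Matrix (Fin a) (Fin N) F)
    (i l : Fin t) :
    (∑ i' : Fin t, ∑ j : Fin s, ∑ k : Fin s, ∑ l' : Fin t,
      if (i' : ℕ) + t * (s - 1 + (j : ℕ) - (k : ℕ)) + t * (2 * s - 1) * (l' : ℕ)
          = (i : ℕ) + t * (s - 1) + t * (2 * s - 1) * (l : ℕ)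
      then A i' j * B k l' else 0)
      = ∑ k : Fin s, A i k * B k l := by
  have key : ∀ (i' : Fin t) (j k : Fin s) (l' : Fin t),
      ((i' : ℕ) + t * (s - 1 + (j : ℕ) - (k : ℕ)) + t * (2 * s - 1) * (l' : ℕ)
          = (i : ℕ) + t * (s - 1) + t * (2 * s - 1) * (l : ℕ))
        ↔ (i' = i ∧ j = k ∧ l' = l) := by
    intro i' j k l'
    constructor
    · intro h
      have h' : (i' : ℕ) + t * ((s - 1 + (j : ℕ) - (k : ℕ)) + (2 * s - 1) * (l' : ℕ))
          = (i : ℕ) + t * ((s - 1) + (2 * s - 1) * (l : ℕ)) := by ring_nf; ring_nf at h; omega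
      obtain ⟨h1, h2⟩ := polydot_aux t _ _ _ _ i'.isLt i.isLt h'
      have hj : (j : ℕ) < s := j.isLt
      have hk : (k : ℕ) < s := k.isLt
      obtain ⟨h3, h4⟩ := polydot_aux (2 * s - 1) _ _ _ _ (by omega) (by omega) h2
      exact ⟨Fin.ext h1, Fin.ext (by omega), Fin.ext h4⟩
    · rintro ⟨rfl, rfl, rfl⟩
      have hj : s - 1 + (j : ℕ) - (j : ℕ) = s - 1 := by omega
      rw [hj]
  simp only [key, ite_and]
  simp [Finset.sum_ite_eq', Finset.sum_ite_eq]
end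

section
/- In the PolyDot exponent map, the exponents e(i,j,k,l) = i + t(s−1+j−k) + t(2s−1)l for 0 ≤ i,l ≤ t−1 and 0 ≤ j,k ≤ s−1 satisfy: e(i,j,k,l) = e(i',j',k',l') implies i = i', j−k = j'−k', and l = l'. In particular, distinct triples (i, j−k, l) yield distinct exponents. -/
/-- Injectivity of the PolyDot exponent map on the triples (i, j−k, l): equal exponents
force i = i', j − k = j' − k' (as integers) and l = l'. -/
theorem polydot_exponent_injective (s t : ℕ) (hs : 0 < s) (ht : 0 < t)
    (i i' l l' : Fin t) (j j' k k' : Fin s)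
    (h : (i : ℕ) + t * (s - 1 + (j : ℕ) - (k : ℕ)) + t * (2 * s - 1) * (l : ℕ)
       = (i' : ℕ) + t * (s - 1 + (j' : ℕ) - (k' : ℕ)) + t * (2 * s - 1) * (l' : ℕ)) :
    i = i' ∧ ((j : ℕ) : ℤ) - ((k : ℕ) : ℤ) = ((j' : ℕ) : ℤ) - ((k' : ℕ) : ℤ) ∧ l = l' := by
  set A := s - 1 + (j : ℕ) - (k : ℕ) with hA
  set A' := s - 1 + (j' : ℕ) - (k' : ℕ) with hA'
  have hAlt : A < 2 * s - 1 := by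
    have := j.isLt; have := k.isLt; omega
  have hAlt' : A' < 2 * s - 1 := by
    have := j'.isLt; have := k'.isLt; omega
  have h1 : (i : ℕ) + (A + (2 * s - 1) * (l : ℕ)) * t
      = (i' : ℕ) + (A' + (2 * s - 1) * (l' : ℕ)) * t := by
    have : (i : ℕ) + t * A + t * (2 * s - 1) * (l : ℕ)
        = (i : ℕ) + (A + (2 * s - 1) * (l : ℕ)) * t := by ring
    rw [this] at h
    have : (i' : ℕ) + t * A' + t * (2 * s - 1) * (l' : ℕ)
        = (i' : ℕ) + (A' + (2 * s - 1) * (l' : ℕ)) * t := by ring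
    rw [this] at h
    exact h
  have hi : (i : ℕ) = (i' : ℕ) := by
    have := congrArg (· % t) h1
    simpa [Nat.add_mul_mod_self_right, Nat.mod_eq_of_lt i.isLt,
      Nat.mod_eq_of_lt i'.isLt] using this
  have h2 : A + (2 * s - 1) * (l : ℕ) = A' + (2 * s - 1) * (l' : ℕ) := by
    rw [hi] at h1
    have := Nat.add_left_cancel h1
    exact Nat.eq_of_mul_eq_mul_right ht this
  have h2' : A + (l : ℕ) * (2 * s - 1) = A' + (l' : ℕ) * (2 * s - 1) := by
    rw [Nat.mul_comm (2*s-1) (l:ℕ), Nat.mul_comm (2*s-1) (l':ℕ)] at h2; exact h2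
  have hAeq : A = A' := by
    have := congrArg (· % (2 * s - 1)) h2'
    simpa [Nat.add_mul_mod_self_right, Nat.mod_eq_of_lt hAlt,
      Nat.mod_eq_of_lt hAlt'] using this
  have hl : (l : ℕ) = (l' : ℕ) := by
    rw [hAeq] at h2'
    have := Nat.add_left_cancel h2'
    exact Nat.eq_of_mul_eq_mul_right (by omega) this
  refine ⟨Fin.ext hi, ?_, Fin.ext hl⟩
  have hj := j.isLt; have hk := k.isLt
  have hj' := j'.isLt; have hk' := k'.isLt
  omega
end

section
/- For each i ∈ {1,…,n/2} (n even), let p_{C_i}(x) = p_{A_i}(x) p_{B_i}(x) where p_{A_i}(x) = Σ_{j=1}^m A^{(i)}_j x^{j−1} and p_{B_i}(x) = Σ_{j=1}^m B^{(i)}_j x^{m−j}. Then the coefficient of x^{m^{n/2} − 1} in the product Π_{i=1}^{n/2} p_{C_i}(x^{m^{i−1}}) equals Π_{i=1}^{n/2} (Σ_{j=1}^m A^{(i)}_j B^{(i)}_j). -/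
open Finset

lemma geom_aux (m : ℕ) (hm : 1 ≤ m) : ∀ w : ℕ, ∑ i : Fin w, m ^ (i:ℕ) * (m - 1) = m ^ w - 1 := by
  intro w
  induction w with
  | zero => simp
  | succ n ih =>
    rw [Fin.sum_univ_succ]
    simp only [Fin.val_zero, pow_zero, one_mul, Fin.val_succ, pow_succ', mul_assoc]
    rw [← Finset.mul_sum, ih, Nat.mul_sub, mul_one]
    have h2 : 1 ≤ m ^ n := Nat.one_le_pow _ _ (by omega)
    have h3 : m ≤ m * m ^ n := Nat.le_mul_of_pos_right m (by omega)
    generalize hQ : m * m ^ n = Q at h3 ⊢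
    omega

lemma digits_unique (m : ℕ) (hm : 2 ≤ m) :
    ∀ (w : ℕ) (d : Fin w → ℕ), (∀ i, d i ≤ 2*(m-1)) →
    (∑ i : Fin w, m ^ (i:ℕ) * d i) = m ^ w - 1 → ∀ i, d i = m - 1 := by
  intro w
  induction w with
  | zero => intro d _ _ i; exact i.elim0
  | succ n ih =>
    intro d hd hsum i
    rw [Fin.sum_univ_succ] at hsum
    simp only [Fin.val_zero, pow_zero, one_mul, Fin.val_succ, pow_succ', mul_assoc] at hsum
    rw [← Finset.mul_sum] at hsum
    have hM1 : 1 ≤ m ^ n := Nat.one_le_pow _ _ (by omega)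
    have hd0 : d 0 ≤ 2*(m-1) := hd 0
    have hlt : (∑ i : Fin n, m ^ (i:ℕ) * d i.succ) < m ^ n := by
      by_contra h
      push_neg at h
      have h1 : m * m ^ n ≤ m * (∑ i : Fin n, m ^ (i:ℕ) * d i.succ) := Nat.mul_le_mul_left m h
      have hQ1 : 1 ≤ m * m ^ n := Nat.mul_pos (by omega) hM1
      generalize hP : m * (∑ i : Fin n, m ^ (i:ℕ) * d i.succ) = P at hsum h1
      generalize hQ : m * m ^ n = Q at hsum h1 hQ1
      omega
    obtain ⟨k, hk⟩ : ∃ k, m ^ n = (∑ i : Fin n, m ^ (i:ℕ) * d i.succ) + k :=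
      ⟨_, (Nat.add_sub_cancel' hlt.le).symm⟩
    rw [hk, Nat.mul_add] at hsum
    have hk0 : k ≠ 0 := by rintro rfl; omega
    have hmk : m * k = d 0 + 1 := by
      have hP1 : 1 ≤ m * k := Nat.mul_pos (by omega) (by omega)
      generalize hP : m * (∑ i : Fin n, m ^ (i:ℕ) * d i.succ) = P at hsum
      generalize hQ : m * k = Q at hsum hP1 ⊢
      omega
    have hk1 : k = 1 := by
      rcases Nat.lt_or_ge k 2 with h | h
      · omega
      · have h2 : m * 2 ≤ m * k := Nat.mul_le_mul_left m h
        clear hsum hk hlt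
        omega
    subst hk1
    rw [mul_one] at hmk
    have hd0' : d 0 = m - 1 := by omega
    have hStail : (∑ i : Fin n, m ^ (i:ℕ) * d i.succ) = m ^ n - 1 := by
      clear hsum; omega
    have htail := ih (fun i => d i.succ) (fun i => hd i.succ) hStail
    refine Fin.cases ?_ ?_ i
    · exact hd0'
    · intro j; exact htail j

lemma list_prod_sum {M : Type*} [NonAssocSemiring M] (m : ℕ) :
    ∀ (w : ℕ) (f : Fin w → Fin m → M),
    (List.ofFn (fun i => ∑ c : Fin m, f i c)).prod
      = ∑ c : Fin w → Fin m, (List.ofFn (fun i => f i (c i))).prod := by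
  intro w
  induction w with
  | zero =>
    intro f
    simp [List.ofFn_zero]
  | succ n ih =>
    intro f
    rw [List.ofFn_succ, List.prod_cons, ih (fun i => f i.succ), Finset.sum_mul_sum]
    rw [← (Fin.consEquiv (fun _ : Fin (n+1) => Fin m)).sum_comp]
    rw [Fintype.sum_prod_type]
    apply Finset.sum_congr rfl
    intro a _
    apply Finset.sum_congr rfl
    intro c _
    rw [List.ofFn_succ, List.prod_cons]
    simp [Fin.consEquiv]

/-- n-matrix code, n = 2w even: the coefficient of x^{m^w − 1} in
Π_{i=1}^{w} p_{C_i}(x^{m^{i−1}}), where p_{C_i}(x) = p_{A_i}(x)p_{B_i}(x) with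
p_{A_i}(x) = Σ_j A^{(i)}_j x^{j−1} and p_{B_i}(x) = Σ_j B^{(i)}_j x^{m−j}, equals the
ordered product Π_{i=1}^{w} (Σ_j A^{(i)}_j B^{(i)}_j). With 0-based block indices, block j
of A_i carries x^j and block j' of B_i carries x^{m−1−j'}; the coefficient of x^E in the
product is the sum over index tuples (j, j') with Σ_i m^i (j_i + (m−1−j'_i)) = E of the
ordered matrix products. -/
theorem nmat_even_coefficient (F : Type*) [Field F] (m w N q : ℕ) (hm : 2 ≤ m) (hw : 1 ≤ w)
    (A : Fin w → Fin m → Matrix (Fin N) (Fin q) F)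
    (B : Fin w → Fin m → Matrix (Fin q) (Fin N) F) :
    (∑ j : Fin w → Fin m, ∑ j' : Fin w → Fin m,
      if (∑ i : Fin w, m ^ (i : ℕ) * ((j i : ℕ) + (m - 1 - (j' i : ℕ)))) = m ^ w - 1
      then (List.ofFn (fun i : Fin w => A i (j i) * B i (j' i))).prod else 0)
    = (List.ofFn (fun i : Fin w => ∑ c : Fin m, A i c * B i c)).prod := by
  have hcond : ∀ j j' : Fin w → Fin m,
      ((∑ i : Fin w, m ^ (i : ℕ) * ((j i : ℕ) + (m - 1 - (j' i : ℕ)))) = m ^ w - 1) ↔ j = j' := by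
    intro j j'
    constructor
    · intro h
      have := digits_unique m hm w (fun i => (j i : ℕ) + (m - 1 - (j' i : ℕ)))
        (fun i => by show (j i : ℕ) + (m - 1 - (j' i : ℕ)) ≤ 2*(m-1); have := (j i).isLt; have := (j' i).isLt; omega) h
      funext i
      have hi : (j i : ℕ) + (m - 1 - (j' i : ℕ)) = m - 1 := this i
      have h1 := (j i).isLt
      have h2 := (j' i).isLt
      exact Fin.ext (by omega)
    · rintro rfl
      have : ∀ i : Fin w, (j i : ℕ) + (m - 1 - (j i : ℕ)) = m - 1 := by
        intro i; have := (j i).isLt; omega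
      calc (∑ i : Fin w, m ^ (i : ℕ) * ((j i : ℕ) + (m - 1 - (j i : ℕ))))
          = ∑ i : Fin w, m ^ (i : ℕ) * (m - 1) := by
            exact Finset.sum_congr rfl (fun i _ => by rw [this i])
        _ = m ^ w - 1 := geom_aux m (by omega) w
  calc (∑ j : Fin w → Fin m, ∑ j' : Fin w → Fin m,
      if (∑ i : Fin w, m ^ (i : ℕ) * ((j i : ℕ) + (m - 1 - (j' i : ℕ)))) = m ^ w - 1
      then (List.ofFn (fun i : Fin w => A i (j i) * B i (j' i))).prod else 0)
      = ∑ j : Fin w → Fin m, ∑ j' : Fin w → Fin m,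
        if j = j' then (List.ofFn (fun i : Fin w => A i (j i) * B i (j' i))).prod else 0 := by
        apply Finset.sum_congr rfl; intro j _
        apply Finset.sum_congr rfl; intro j' _
        simp only [hcond j j']
    _ = ∑ j : Fin w → Fin m, (List.ofFn (fun i : Fin w => A i (j i) * B i (j i))).prod := by
        apply Finset.sum_congr rfl; intro j _
        rw [Finset.sum_ite_eq Finset.univ j
          (fun j' => (List.ofFn (fun i : Fin w => A i (j i) * B i (j' i))).prod)]
        simp
    _ = (List.ofFn (fun i : Fin w => ∑ c : Fin m, A i c * B i c)).prod := by
        rw [list_prod_sum m w (fun i c => A i c * B i c)]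
end

section
/- Let n ≥ 3 be odd, and for i ∈ {1,…,(n−1)/2} let p_{C_i}(x) = p_{A_i}(x) p_{B_i}(x) with p_{A_i}(x) = Σ_{j=1}^m A^{(i)}_j x^{j−1}, p_{B_i}(x) = Σ_{j=1}^m B^{(i)}_j x^{m−j}, and let p_{C_{(n+1)/2}}(x) = Σ_{j=1}^m A^{((n+1)/2)}_j x^{j−1}. Then for each j ∈ {1,…,m}, the coefficient of x^{j·m^{(n−1)/2} − 1} in Π_{i=1}^{(n+1)/2} p_{C_i}(x^{m^{i−1}}) equals (Π_{i=1}^{(n−1)/2} Σ_{k=1}^m A^{(i)}_k B^{(i)}_k) · A^{((n+1)/2)}_j. -/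
lemma prod_ofFn_sum {R : Type*} [Semiring R] {m : ℕ} :
    ∀ (w : ℕ) (f : Fin w → Fin m → R),
    (List.ofFn fun i => ∑ k : Fin m, f i k).prod
      = ∑ g : Fin w → Fin m, (List.ofFn fun i => f i (g i)).prod
  | 0, f => by simp
  | (w+1), f => by
    rw [List.ofFn_succ, List.prod_cons, prod_ofFn_sum w (fun i k => f i.succ k),
      Finset.sum_mul_sum]
    rw [← Equiv.sum_comp (Fin.consEquiv (fun _ : Fin (w+1) => Fin m))
      (fun g => (List.ofFn fun i => f i (g i)).prod), Fintype.sum_prod_type]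
    apply Finset.sum_congr rfl; intro k _
    apply Finset.sum_congr rfl; intro g _
    simp [List.ofFn_succ, Fin.consEquiv]

lemma digit_unique (m : ℕ) (hm : 2 ≤ m) :
    ∀ (w : ℕ) (d : Fin w → ℕ), (∀ i, d i ≤ 2*m-2) → ∀ (c jj : ℕ), jj < m →
    ((∑ i : Fin w, m ^ (i:ℕ) * d i) + m ^ w * c = (jj+1) * m ^ w - 1 ↔
      (∀ i, d i = m-1) ∧ c = jj)
  | 0, d, hd, c, jj, hjj => by
    simp only [Finset.univ_eq_empty, Finset.sum_empty, pow_zero, one_mul, zero_add]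
    constructor
    · intro h; exact ⟨fun i => i.elim0, by omega⟩
    · rintro ⟨-, rfl⟩; omega
  | (w+1), d, hd, c, jj, hjj => by
    rw [Fin.sum_univ_succ]
    have hT : (∑ i : Fin w, m ^ ((i.succ : Fin (w+1)) : ℕ) * d i.succ)
        = m * ∑ i : Fin w, m ^ (i : ℕ) * d i.succ := by
      rw [Finset.mul_sum]
      apply Finset.sum_congr rfl; intro i _
      rw [Fin.val_succ, pow_succ]; ring
    rw [hT]
    set T := ∑ i : Fin w, m ^ (i : ℕ) * d i.succ with hTdef
    have hRHS : (jj+1) * m ^ (w+1) - 1 = m * ((jj+1) * m ^ w - 1) + (m-1) := by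
      have hx : (jj+1) * m ^ (w+1) = m * ((jj+1) * m ^ w) := by ring
      have h1 : 1 ≤ (jj+1) * m ^ w := Nat.one_le_iff_ne_zero.mpr (by positivity)
      rw [hx, Nat.mul_sub]
      have h2 : m * 1 ≤ m * ((jj+1) * m ^ w) := Nat.mul_le_mul_left m h1
      omega
    have key : ∀ U V : ℕ, d 0 + m * U = m * V + (m-1) ↔ (d 0 = m - 1 ∧ U = V) := by
      intro U V
      constructor
      · intro h
        rcases lt_trichotomy U V with hUV | hUV | hUV
        · have h2 : m * (U+1) ≤ m * V := Nat.mul_le_mul_left m hUV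
          rw [Nat.mul_add, mul_one] at h2
          have hd0 := hd 0
          exfalso; omega
        · subst hUV; have hd0 := hd 0; omega
        · have h2 : m * (V+1) ≤ m * U := Nat.mul_le_mul_left m hUV
          rw [Nat.mul_add, mul_one] at h2
          have hd0 := hd 0
          exfalso; omega
      · rintro ⟨h1, rfl⟩; omega
    have hE : m ^ ((0 : Fin (w+1)) : ℕ) * d 0 + m * T + m ^ (w+1) * c
        = d 0 + m * (T + m ^ w * c) := by
      simp only [Fin.val_zero, pow_zero, one_mul, pow_succ]; ring
    rw [hRHS, hE, key (T + m ^ w * c) ((jj+1) * m ^ w - 1),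
      digit_unique m hm w (fun i => d i.succ) (fun i => hd i.succ) c jj hjj]
    constructor
    · rintro ⟨h0, hs, rfl⟩
      exact ⟨fun i => Fin.cases h0 hs i, rfl⟩
    · rintro ⟨hall, rfl⟩
      exact ⟨hall 0, fun i => hall i.succ, rfl⟩


/-- n-matrix code, n = 2w+1 odd: for each block index jj of the last matrix, the
coefficient of x^{(jj+1) m^w − 1} in Π_{i=1}^{w} p_{C_i}(x^{m^{i−1}}) · p_{A_{w+1}}(x^{m^w})
equals (Π_{i=1}^{w} Σ_k A^{(i)}_k B^{(i)}_k) · A^{(w+1)}_{jj}. Indices are 0-based, so block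
jj ∈ {0,…,m−1} corresponds to j = jj+1 ∈ {1,…,m} and exponent j·m^w − 1. -/
theorem nmat_odd_coefficient (F : Type*) [Field F] (m w N q : ℕ) (hm : 2 ≤ m) (hw : 1 ≤ w)
    (A : Fin w → Fin m → Matrix (Fin N) (Fin q) F)
    (B : Fin w → Fin m → Matrix (Fin q) (Fin N) F)
    (Alast : Fin m → Matrix (Fin N) (Fin q) F)
    (jj : Fin m) :
    (∑ j : Fin w → Fin m, ∑ j' : Fin w → Fin m, ∑ c : Fin m,
      if (∑ i : Fin w, m ^ (i : ℕ) * ((j i : ℕ) + (m - 1 - (j' i : ℕ))))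
            + m ^ w * (c : ℕ) = ((jj : ℕ) + 1) * m ^ w - 1
      then (List.ofFn (fun i : Fin w => A i (j i) * B i (j' i))).prod * Alast c else 0)
    = (List.ofFn (fun i : Fin w => ∑ k : Fin m, A i k * B i k)).prod * Alast jj := by
  have hiff : ∀ (j j' : Fin w → Fin m) (c : Fin m),
      ((∑ i : Fin w, m ^ (i : ℕ) * ((j i : ℕ) + (m - 1 - (j' i : ℕ))))
            + m ^ w * (c : ℕ) = ((jj : ℕ) + 1) * m ^ w - 1)
      ↔ (j = j' ∧ c = jj) := by
    intro j j' c
    rw [digit_unique m hm w (fun i => (j i : ℕ) + (m - 1 - (j' i : ℕ)))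
      (fun i => by show (j i : ℕ) + (m - 1 - (j' i : ℕ)) ≤ 2*m-2; have := (j i).isLt; have := (j' i).isLt; omega) c jj jj.isLt]
    constructor
    · rintro ⟨h1, h2⟩
      refine ⟨funext fun i => ?_, Fin.ext h2⟩
      have := h1 i; have := (j i).isLt; have := (j' i).isLt
      exact Fin.ext (by omega)
    · rintro ⟨rfl, rfl⟩
      refine ⟨fun i => ?_, rfl⟩
      show (j i : ℕ) + (m - 1 - (j i : ℕ)) = m - 1
      have := (j i).isLt; omega
  calc (∑ j : Fin w → Fin m, ∑ j' : Fin w → Fin m, ∑ c : Fin m,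
      if (∑ i : Fin w, m ^ (i : ℕ) * ((j i : ℕ) + (m - 1 - (j' i : ℕ))))
            + m ^ w * (c : ℕ) = ((jj : ℕ) + 1) * m ^ w - 1
      then (List.ofFn (fun i : Fin w => A i (j i) * B i (j' i))).prod * Alast c else 0)
      = ∑ j : Fin w → Fin m, ∑ j' : Fin w → Fin m, ∑ c : Fin m,
        if j = j' ∧ c = jj
        then (List.ofFn (fun i : Fin w => A i (j i) * B i (j' i))).prod * Alast c else 0 := by
        refine Finset.sum_congr rfl fun j _ => Finset.sum_congr rfl fun j' _ =>
          Finset.sum_congr rfl fun c _ => ?_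
        rw [if_congr (hiff j j' c) rfl rfl]
    _ = ∑ j : Fin w → Fin m, (List.ofFn (fun i : Fin w => A i (j i) * B i (j i))).prod * Alast jj := by
        simp [ite_and, Finset.sum_ite_eq, Finset.sum_ite_eq']
    _ = (List.ofFn (fun i : Fin w => ∑ k : Fin m, A i k * B i k)).prod * Alast jj := by
        rw [prod_ofFn_sum]; exact (Matrix.sum_mul Finset.univ (fun g : Fin w → Fin m => (List.ofFn fun i => A i (g i) * B i (g i)).prod) (Alast jj)).symm
end
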